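/- arXiv:2105.05334 — 2 statements merged into one kernel-verified Lean document; each statement's English description precedes it below -/
import Mathlib

section
/- Preservation of the Claim-B exclusion region under an R₄ update step: let Ω ⊆ S and let (c,p) ∈ Ω satisfy Ω ∩ ψ_B(c,p) = ∅. Then for every threshold t > 0, writing Ω' for the image of Ω under U_{4,t} and (c',p') = U_{4,t}(c,p), one has Ω' ∩ ψ_B(c',p') = ∅. -/
/-- The RMM state space `S = {(x_C, x_P) : 0 ≤ x_C ≤ M, 0 ≤ x_P, x_C + x_P ≤ N}`. -/
def RMMState (N M : ℕ) : Set (ℤ × ℤ) :=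
  {x | 0 ≤ x.1 ∧ x.1 ≤ (M : ℤ) ∧ 0 ≤ x.2 ∧ x.1 + x.2 ≤ (N : ℤ)}

/-- The reaction rates `λ₁, λ₂, λ₃, λ₄` (indexed by `Fin 4`, so reaction `Rᵢ` has index `i-1`). -/
noncomputable def RMMrate (k₁ k₂ k₃ k₄ : ℝ) (N M : ℕ) (i : Fin 4) (x : ℤ × ℤ) : ℝ :=
  match i with
  | 0 => k₁ * ((N : ℝ) - (x.1 : ℝ) - (x.2 : ℝ)) * ((M : ℝ) - (x.1 : ℝ))
  | 1 => k₂ * (x.1 : ℝ)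
  | 2 => k₃ * (x.1 : ℝ)
  | 3 => k₄ * (x.2 : ℝ) * ((M : ℝ) - (x.1 : ℝ))

/-- The reaction displacements `R₁ = (1,0)`, `R₂ = (-1,0)`, `R₃ = (-1,1)`, `R₄ = (1,-1)`. -/
def RMMdisp : Fin 4 → ℤ × ℤ
  | 0 => (1, 0)
  | 1 => (-1, 0)
  | 2 => (-1, 1)
  | 3 => (1, -1)

/-- The coupled one-step update `U_{i,t}`: move by `Rᵢ` if `λᵢ(x) ≥ t`, stay put otherwise. -/
noncomputable def RMMupdate (k₁ k₂ k₃ k₄ : ℝ) (N M : ℕ) (i : Fin 4) (t : ℝ)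
    (x : ℤ × ℤ) : ℤ × ℤ :=
  if RMMrate k₁ k₂ k₃ k₄ N M i x ≥ t then x + RMMdisp i else x

/-- Claim-A exclusion region `ψ_A(c,p)`. -/
def psiA (c p : ℤ) : Set (ℤ × ℤ) :=
  {x | x.2 < p} ∪ {x | x.1 < c ∧ x.1 + x.2 ≤ c + p}

/-- Claim-B exclusion region `ψ_B(c,p)`. -/
def psiB (c p : ℤ) : Set (ℤ × ℤ) :=
  {x | x.2 > p} ∪ {x | x.1 > c ∧ x.1 + x.2 > c + p}

/-- The coupled flow: composition of the one-step updates along a list of parameters. -/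
noncomputable def RMMflow (k₁ k₂ k₃ k₄ : ℝ) (N M : ℕ) (L : List (Fin 4 × ℝ))
    (x : ℤ × ℤ) : ℤ × ℤ :=
  L.foldl (fun y q => RMMupdate k₁ k₂ k₃ k₄ N M q.1 q.2 y) x


/-!
Outside `ψ_B(c,p)` means `x_P ≤ p` and `x_C + x_P ≤ c + p`. Reaction `R₄` conserves `x_C + x_P`,
so only `x_P ≤ p` can break, and only when `(c,p)` moves while `x` with `x_P = p` stays. But then
`x_C ≤ c`, and `λ₄(x_C, p) = k₄ p (M - x_C)` is at least `λ₄(c,p)`, so `x` moves as well.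
-/

lemma notMem_psiB_iff {c p : ℤ} {x : ℤ × ℤ} :
    x ∉ psiB c p ↔ x.2 ≤ p ∧ x.1 + x.2 ≤ c + p := by
  simp only [psiB, Set.mem_union, Set.mem_ofPred_eq, not_or, not_and, not_lt]
  omega

section UpdateR4

variable (k₁ k₂ k₃ k₄ : ℝ) (N M : ℕ) (t : ℝ)

lemma RMMupdate_three_fst_add_snd (x : ℤ × ℤ) :
    (RMMupdate k₁ k₂ k₃ k₄ N M 3 t x).1 + (RMMupdate k₁ k₂ k₃ k₄ N M 3 t x).2 = x.1 + x.2 := by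
  unfold RMMupdate
  split_ifs
  · simp only [RMMdisp, Prod.fst_add, Prod.snd_add]
    ring
  · rfl

lemma RMMupdate_three_snd (x : ℤ × ℤ) :
    (RMMupdate k₁ k₂ k₃ k₄ N M 3 t x).2 =
      if t ≤ RMMrate k₁ k₂ k₃ k₄ N M 3 x then x.2 - 1 else x.2 := by
  unfold RMMupdate
  split_ifs
  · simp only [RMMdisp, Prod.snd_add]
    ring
  · rfl

variable {k₄}

lemma RMMrate_three_antitone_fst (hk₄ : 0 ≤ k₄) {a b q : ℤ} (hq : 0 ≤ q) (hab : a ≤ b) :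
    RMMrate k₁ k₂ k₃ k₄ N M 3 (b, q) ≤ RMMrate k₁ k₂ k₃ k₄ N M 3 (a, q) := by
  have hab' : (a : ℝ) ≤ b := Int.cast_le.mpr hab
  have hkq : 0 ≤ k₄ * (q : ℝ) := mul_nonneg hk₄ (by exact_mod_cast hq)
  simp only [RMMrate]
  gcongr

lemma RMMupdate_three_snd_le (hk₄ : 0 ≤ k₄) {x y : ℤ × ℤ} (hy : 0 ≤ y.2)
    (hxy : x ∉ psiB y.1 y.2) :
    (RMMupdate k₁ k₂ k₃ k₄ N M 3 t x).2 ≤ (RMMupdate k₁ k₂ k₃ k₄ N M 3 t y).2 := by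
  obtain ⟨h₂, hsum⟩ := notMem_psiB_iff.mp hxy
  rw [RMMupdate_three_snd, RMMupdate_three_snd]
  rcases h₂.lt_or_eq with hlt | heq
  · split_ifs <;> omega
  · obtain ⟨x₁, x₂⟩ := x
    obtain ⟨y₁, y₂⟩ := y
    dsimp only at heq hsum hy ⊢
    subst heq
    have hmono := RMMrate_three_antitone_fst k₁ k₂ k₃ N M hk₄ hy (show x₁ ≤ y₁ by omega)
    by_cases hfire : t ≤ RMMrate k₁ k₂ k₃ k₄ N M 3 (y₁, x₂)
    · rw [if_pos (hfire.trans hmono), if_pos hfire]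
    · rw [if_neg hfire]
      split_ifs <;> omega

lemma RMMupdate_three_notMem_psiB (hk₄ : 0 ≤ k₄) {x y : ℤ × ℤ} (hy : 0 ≤ y.2)
    (hxy : x ∉ psiB y.1 y.2) :
    RMMupdate k₁ k₂ k₃ k₄ N M 3 t x ∉
      psiB (RMMupdate k₁ k₂ k₃ k₄ N M 3 t y).1 (RMMupdate k₁ k₂ k₃ k₄ N M 3 t y).2 := by
  refine notMem_psiB_iff.mpr ⟨RMMupdate_three_snd_le k₁ k₂ k₃ N M t hk₄ hy hxy, ?_⟩
  rw [RMMupdate_three_fst_add_snd, RMMupdate_three_fst_add_snd]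
  exact (notMem_psiB_iff.mp hxy).2

end UpdateR4

theorem psiB_preserved_R4_general (k₁ k₂ k₃ k₄ : ℝ)
    (hk₄ : 0 < k₄)
    (N M : ℕ)
    (Ω : Set (ℤ × ℤ)) (hΩ : Ω ⊆ RMMState N M)
    (c p : ℤ) (hcp : (c, p) ∈ Ω)
    (hdisj : Ω ∩ psiB c p = ∅)
    (t : ℝ) :
    (RMMupdate k₁ k₂ k₃ k₄ N M 3 t '' Ω) ∩
      psiB (RMMupdate k₁ k₂ k₃ k₄ N M 3 t (c, p)).1
        (RMMupdate k₁ k₂ k₃ k₄ N M 3 t (c, p)).2 = ∅ := by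
  rw [Set.eq_empty_iff_forall_notMem]
  rintro _ ⟨⟨x, hx, rfl⟩, hmem⟩
  have hp : 0 ≤ p := (hΩ hcp).2.2.1
  have hxc : x ∉ psiB c p := fun h ↦ Set.eq_empty_iff_forall_notMem.mp hdisj x ⟨hx, h⟩
  exact RMMupdate_three_notMem_psiB k₁ k₂ k₃ N M t hk₄.le (y := (c, p)) hp hxc hmem

/-- Preservation of the Claim-B exclusion region under an R4 update step. -/
theorem psiB_preserved_R4 (k₁ k₂ k₃ k₄ : ℝ)
    (hk₁ : 0 < k₁) (hk₂ : 0 < k₂) (hk₃ : 0 < k₃) (hk₄ : 0 < k₄)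
    (N M : ℕ) (hM : 1 ≤ M) (hMN : M ≤ N)
    (Ω : Set (ℤ × ℤ)) (hΩ : Ω ⊆ RMMState N M)
    (c p : ℤ) (hcp : (c, p) ∈ Ω)
    (hdisj : Ω ∩ psiB c p = ∅)
    (t : ℝ) (ht : 0 < t) :
    (RMMupdate k₁ k₂ k₃ k₄ N M 3 t '' Ω) ∩
      psiB (RMMupdate k₁ k₂ k₃ k₄ N M 3 t (c, p)).1
        (RMMupdate k₁ k₂ k₃ k₄ N M 3 t (c, p)).2 = ∅ :=
  psiB_preserved_R4_general k₁ k₂ k₃ k₄ hk₄ N M Ω hΩ c p hcp hdisj t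
end

section
/- Coupling Theorem for the Reversible Michaelis–Menten network: for every finite sequence of update parameters (i₁,t₁),…,(i_n,t_n) with all t_j > 0, if the coupled flow Φ_n = U_{i_n,t_n} ∘ ⋯ ∘ U_{i₁,t₁} satisfies Φ_n(0,0) = Φ_n(0,N) = z, then Φ_n(y) = z for every starting state y ∈ S; that is, coupling of the trajectories started from the two corner states (0,0) and (0,N) implies coupling of the trajectories started from all states of S. -/
/-! In the coordinates `(x_P, x_C + x_P)` every displacement `Rᵢ` changes exactly one coordinate
by `±1`. Hence for states `u ≤ v` of `S` (componentwise order in these coordinates) an update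
`U_{i,t}` can only break the order when `u` and `v` agree in the coordinate that `Rᵢ` changes and
exactly one of them fires. On such pairs the rate `λᵢ` is a product `a · w` with `w ≥ 0` and `w`
larger at the state that did not fire, while `λᵢ ≥ t > 0` at the state that fired forces `a > 0`;
so both fire, and every `U_{i,t}` is monotone on `S`. The corners `(0,0)` and `(0,N)` are the least
and greatest elements of `S`, so every trajectory from `S` is squeezed between the two corner
trajectories. -/

def RMMle (u v : ℤ × ℤ) : Prop := u.2 ≤ v.2 ∧ u.1 + u.2 ≤ v.1 + v.2

theorem RMMle.antisymm {u v : ℤ × ℤ} : RMMle u v → RMMle v u → u = v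
  | ⟨hp, hs⟩, ⟨hp', hs'⟩ => Prod.ext (by omega) (le_antisymm hp hp')

theorem RMMle_of_mem_left {N M : ℕ} {y : ℤ × ℤ} (hy : y ∈ RMMState N M) : RMMle (0, 0) y := by
  obtain ⟨hc, -, hp, -⟩ := hy
  exact ⟨hp, by simp only; omega⟩

theorem RMMle_of_mem_right {N M : ℕ} {y : ℤ × ℤ} (hy : y ∈ RMMState N M) :
    RMMle y (0, (N : ℤ)) := by
  obtain ⟨hc, -, -, hs⟩ := hy
  exact ⟨by simp only; omega, by simpa using hs⟩

theorem le_mul_of_le_mul_of_le {R : Type*} [Semiring R] [LinearOrder R] [IsStrictOrderedRing R]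
    {a x y t : R} (ht : 0 < t) (h : t ≤ a * x) (hx : 0 ≤ x) (hxy : x ≤ y) : t ≤ a * y :=
  h.trans (mul_le_mul_of_nonneg_left hxy (pos_of_mul_pos_left (ht.trans_le h) hx).le)

section Update

variable {k₁ k₂ k₃ k₄ : ℝ} {N M : ℕ} {t : ℝ}

theorem RMMupdate_mem (ht : 0 < t) (i : Fin 4) {x : ℤ × ℤ} (hx : x ∈ RMMState N M) :
    RMMupdate k₁ k₂ k₃ k₄ N M i t x ∈ RMMState N M := by
  obtain ⟨hc, hcM, hp, hs⟩ := hx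
  unfold RMMupdate
  split_ifs with hfire
  swap
  · exact ⟨hc, hcM, hp, hs⟩
  -- a reaction can only fire if none of the factors of its rate vanishes
  have hrate : RMMrate k₁ k₂ k₃ k₄ N M i x ≠ 0 := (ht.trans_le hfire).ne'
  fin_cases i <;> simp only [RMMrate] at hrate <;>
    simp only [RMMState, RMMdisp, Set.mem_ofPred_eq, Prod.fst_add, Prod.snd_add]
  · have : x.1 + x.2 ≠ N := fun h => hrate (by rw [sub_sub, ← Int.cast_add, h]; simp)
    have : x.1 ≠ M := fun h => by simp [h] at hrate
    omega
  · have : x.1 ≠ 0 := fun h => by simp [h] at hrate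
    omega
  · have : x.1 ≠ 0 := fun h => by simp [h] at hrate
    omega
  · have : x.2 ≠ 0 := fun h => by simp [h] at hrate
    have : x.1 ≠ M := fun h => by simp [h] at hrate
    omega

theorem RMMupdate_mono (ht : 0 < t) (i : Fin 4) {u v : ℤ × ℤ} (hu : u ∈ RMMState N M)
    (hv : v ∈ RMMState N M) (huv : RMMle u v) :
    RMMle (RMMupdate k₁ k₂ k₃ k₄ N M i t u) (RMMupdate k₁ k₂ k₃ k₄ N M i t v) := by
  obtain ⟨hu0, huM, -, -⟩ := hu
  obtain ⟨hv0, hvM, -, -⟩ := hv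
  obtain ⟨hp, hs⟩ := huv
  have huM' : (u.1 : ℝ) ≤ M := by exact_mod_cast huM
  have hvM' : (v.1 : ℝ) ≤ M := by exact_mod_cast hvM
  have hu0' : (0 : ℝ) ≤ u.1 := by exact_mod_cast hu0
  have hv0' : (0 : ℝ) ≤ v.1 := by exact_mod_cast hv0
  fin_cases i <;> simp only [RMMupdate, RMMrate, RMMdisp, ge_iff_le] <;>
    split_ifs with hfu hfv hfv <;>
    simp only [RMMle, Prod.fst_add, Prod.snd_add] <;> try omega
  -- remaining: reactions 1 to 4 in order, where only `u` fires in 1 and 3 and only `v` in 2 and 4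
  · have : u.1 + u.2 ≠ v.1 + v.2 := fun hsum => hfv <| by
      have hsum' : (v.1 : ℝ) + v.2 = u.1 + u.2 := by exact_mod_cast hsum.symm
      have hc : (v.1 : ℝ) ≤ u.1 := by exact_mod_cast (show v.1 ≤ u.1 by omega)
      rw [sub_sub, hsum', ← sub_sub]
      exact le_mul_of_le_mul_of_le ht hfu (by linarith) (by linarith)
    omega
  · have : u.1 + u.2 ≠ v.1 + v.2 := fun hsum => hfu <| by
      have hc : (v.1 : ℝ) ≤ u.1 := by exact_mod_cast (show v.1 ≤ u.1 by omega)
      exact le_mul_of_le_mul_of_le ht hfv hv0' hc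
    omega
  · have : u.2 ≠ v.2 := fun hp => hfv <| by
      have hc : (u.1 : ℝ) ≤ v.1 := by exact_mod_cast (show u.1 ≤ v.1 by omega)
      exact le_mul_of_le_mul_of_le ht hfu hu0' hc
    omega
  · have : u.2 ≠ v.2 := fun hp => hfu <| by
      have hc : (u.1 : ℝ) ≤ v.1 := by exact_mod_cast (show u.1 ≤ v.1 by omega)
      rw [hp]
      exact le_mul_of_le_mul_of_le ht hfv (by linarith) (by linarith)
    omega

theorem RMMflow_mono {L : List (Fin 4 × ℝ)} (hL : ∀ q ∈ L, 0 < q.2)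
    {u v : ℤ × ℤ} (hu : u ∈ RMMState N M) (hv : v ∈ RMMState N M) (huv : RMMle u v) :
    RMMle (RMMflow k₁ k₂ k₃ k₄ N M L u) (RMMflow k₁ k₂ k₃ k₄ N M L v) := by
  induction L generalizing u v with
  | nil => exact huv
  | cons q L ih =>
    have ht := hL q List.mem_cons_self
    exact ih (fun r hr => hL r (List.mem_cons_of_mem q hr)) (RMMupdate_mem ht q.1 hu)
      (RMMupdate_mem ht q.1 hv) (RMMupdate_mono ht q.1 hu hv huv)

end Update

theorem RMM_coupling_general (k₁ k₂ k₃ k₄ : ℝ)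
    (N M : ℕ)
    (L : List (Fin 4 × ℝ)) (hL : ∀ q ∈ L, 0 < q.2)
    (z : ℤ × ℤ)
    (h₀ : RMMflow k₁ k₂ k₃ k₄ N M L (0, 0) = z)
    (hN : RMMflow k₁ k₂ k₃ k₄ N M L (0, (N : ℤ)) = z)
    (y : ℤ × ℤ) (hy : y ∈ RMMState N M) :
    RMMflow k₁ k₂ k₃ k₄ N M L y = z := by
  have h00 : ((0, 0) : ℤ × ℤ) ∈ RMMState N M := by simp [RMMState]
  have h0N : ((0, (N : ℤ)) : ℤ × ℤ) ∈ RMMState N M := by simp [RMMState]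
  have hlow : RMMle z (RMMflow k₁ k₂ k₃ k₄ N M L y) := by
    rw [← h₀]
    exact RMMflow_mono hL h00 hy (RMMle_of_mem_left hy)
  have hhigh : RMMle (RMMflow k₁ k₂ k₃ k₄ N M L y) z := by
    rw [← hN]
    exact RMMflow_mono hL hy h0N (RMMle_of_mem_right hy)
  exact hhigh.antisymm hlow

/-- Coupling Theorem: if the trajectories started from the corner states `(0,0)` and `(0,N)`
have coupled, then the trajectories started from all states of `S` have coupled. -/
theorem RMM_coupling (k₁ k₂ k₃ k₄ : ℝ)
    (hk₁ : 0 < k₁) (hk₂ : 0 < k₂) (hk₃ : 0 < k₃) (hk₄ : 0 < k₄)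
    (N M : ℕ) (hM : 1 ≤ M) (hMN : M ≤ N)
    (L : List (Fin 4 × ℝ)) (hL : ∀ q ∈ L, 0 < q.2)
    (z : ℤ × ℤ)
    (h₀ : RMMflow k₁ k₂ k₃ k₄ N M L (0, 0) = z)
    (hN : RMMflow k₁ k₂ k₃ k₄ N M L (0, (N : ℤ)) = z)
    (y : ℤ × ℤ) (hy : y ∈ RMMState N M) :
    RMMflow k₁ k₂ k₃ k₄ N M L y = z :=
  RMM_coupling_general k₁ k₂ k₃ k₄ N M L hL z h₀ hN y hy
end
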